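/- Let n = 4r + 3. There do not exist two distinct commuting permutations φ₁, φ₂ of order 2 on a set of n elements, each of which is a product of 2r+1 disjoint transpositions with exactly one fixed point, such that φ₁φ₂ is also a product of 2r+1 disjoint transpositions with at most two fixed points. -/

import Mathlib

/-! Sign argument: a product of `2r+1` disjoint transpositions is odd, and the product of two odd
permutations is even, so `φ₁φ₂` cannot again be a product of `2r+1` disjoint transpositions. -/

namespace Equiv.Perm

theorem sign_eq_neg_one_pow_card_cycleType {α : Type*} [Fintype α] [DecidableEq α]
    {σ : Perm α} (h2 : ∀ c ∈ σ.cycleType, c = 2) :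
    sign σ = (-1) ^ σ.cycleType.card := by
  have hsum : σ.cycleType.sum = 2 * σ.cycleType.card := by
    rw [Multiset.eq_replicate_card.2 h2, Multiset.sum_replicate, Multiset.card_replicate,
      smul_eq_mul, mul_comm]
  rw [sign_of_cycleType, hsum, pow_add, pow_mul, neg_one_sq, one_pow, one_mul]

end Equiv.Perm

open Equiv.Perm in
/-- In S_{4r+3} there is no pair of distinct commuting involutions, each a product
of 2r+1 disjoint transpositions with exactly one fixed point, whose product is an
involution that is a product of 2r+1 disjoint transpositions with at most two
fixed points. -/
theorem no_D2_involution_pair (r : ℕ) :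
    ¬ ∃ φ₁ φ₂ : Equiv.Perm (Fin (4 * r + 3)), φ₁ ≠ φ₂ ∧ Commute φ₁ φ₂ ∧
      orderOf φ₁ = 2 ∧ orderOf φ₂ = 2 ∧
      (∀ c ∈ φ₁.cycleType, c = 2) ∧ (∀ c ∈ φ₂.cycleType, c = 2) ∧
      φ₁.cycleType.card = 2 * r + 1 ∧ φ₂.cycleType.card = 2 * r + 1 ∧
      (Finset.univ.filter fun x => φ₁ x = x).card = 1 ∧
      (Finset.univ.filter fun x => φ₂ x = x).card = 1 ∧
      orderOf (φ₁ * φ₂) = 2 ∧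
      (∀ c ∈ (φ₁ * φ₂).cycleType, c = 2) ∧
      (φ₁ * φ₂).cycleType.card = 2 * r + 1 ∧
      (Finset.univ.filter fun x => (φ₁ * φ₂) x = x).card ≤ 2 := by
  rintro ⟨φ₁, φ₂, -, -, -, -, h₁, h₂, hc₁, hc₂, -, -, -, h₁₂, hc₁₂, -⟩
  have hodd : (-1 : ℤˣ) ^ (2 * r + 1) = -1 := Odd.neg_one_pow ⟨r, rfl⟩
  have h := sign_eq_neg_one_pow_card_cycleType h₁₂
  rw [map_mul, sign_eq_neg_one_pow_card_cycleType h₁, sign_eq_neg_one_pow_card_cycleType h₂,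
    hc₁, hc₂, hc₁₂, hodd] at h
  exact absurd h (by decide)
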